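/- arXiv:1905.06732 — 3 statements merged into one kernel-verified Lean document; each statement's English description precedes it below -/
import Mathlib

section
/- Absence of Zeno behavior: in the transition system generated by Algorithm 1 (state-space generation) for a track-based model in which every traveling time travT(p) is at least 1 time unit and each actor occupies its sub-track for its full traveling time, every infinite execution contains infinitely many timed transitions whose delays sum to infinity; equivalently, only finitely many discrete transitions can occur between any two consecutive timed transitions, bounded by the number of pending events (messages) at that model time. -/
/- Abstract model of the state-space generation: a state consists of the current
model time and the finite multiset of time tags of pending events (messages).  A
discrete step consumes an event enabled at the current time and schedules at most one
new event at least one time unit later (travT ≥ 1); a timed step, possible only when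
no event is enabled, advances the model time to the smallest pending tag. -/

structure MState where
  now : ℝ
  pending : Multiset ℝ

inductive MStep : MState → ℝ → MState → Prop
  | disc (s : MState) (τ : ℝ) (new : Multiset ℝ) :
      τ ∈ s.pending → τ = s.now → Multiset.card new ≤ 1 →
      (∀ t ∈ new, s.now + 1 ≤ t) →
      MStep s 0 ⟨s.now, s.pending.erase τ + new⟩
  | time (s : MState) (d : ℝ) :
      0 < d → (∀ t ∈ s.pending, s.now < t) →
      (s.now + d) ∈ s.pending → (∀ t ∈ s.pending, s.now + d ≤ t) →
      MStep s d ⟨s.now + d, s.pending⟩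

open Classical in
/-- number of events enabled at the current time -/
noncomputable def enab (s : MState) : ℕ := Multiset.count s.now s.pending

open Classical in
/-- number of pending events with tag below `T` -/
noncomputable def nuM (T : ℝ) (s : MState) : ℕ :=
  Multiset.card (s.pending.filter (fun t => t < T))

lemma step_zero {s s' : MState} (h : MStep s 0 s') :
    ∃ τ new, τ ∈ s.pending ∧ τ = s.now ∧ (∀ t ∈ new, s.now + 1 ≤ t) ∧
      s' = ⟨s.now, s.pending.erase τ + new⟩ := by
  cases h with
  | disc τ new hτ hτn hc hnew => exact ⟨τ, new, hτ, hτn, hnew, rfl⟩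
  | time d hd hlt hmem hle => exact absurd hd (lt_irrefl 0)

lemma step_pos {s s' : MState} {d : ℝ} (h : MStep s d s') (hd : 0 < d) :
    s'.now = s.now + d ∧ s'.pending = s.pending ∧ s'.now ∈ s'.pending := by
  cases h with
  | disc => exact absurd hd (lt_irrefl 0)
  | time d hd' hlt hmem hle => exact ⟨rfl, rfl, hmem⟩

lemma step_mem {s s' : MState} {d : ℝ} (h : MStep s d s') (hm : s.now ∈ s.pending) :
    d = 0 := by
  cases h with
  | disc => rfl
  | time d hd hlt hmem hle => exact absurd (hlt _ hm) (lt_irrefl _)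

lemma step_nonneg {s : MState} {d : ℝ} {s' : MState} (h : MStep s d s') : 0 ≤ d := by
  cases h with
  | disc => exact le_refl 0
  | time d hd => exact le_of_lt hd

lemma step_now {s : MState} {d : ℝ} {s' : MState} (h : MStep s d s') :
    s'.now = s.now + d := by
  cases h with
  | disc => simp
  | time => rfl

lemma enab_disc {s : MState} {τ : ℝ} {new : Multiset ℝ}
    (hτ : τ ∈ s.pending) (hτn : τ = s.now) (hnew : ∀ t ∈ new, s.now + 1 ≤ t) :
    enab ⟨s.now, s.pending.erase τ + new⟩ + 1 = enab s := by
  classical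
  unfold enab
  simp only
  have h1 : Multiset.count s.now new = 0 := by
    rw [Multiset.count_eq_zero]
    intro h
    have := hnew _ h
    linarith
  rw [Multiset.count_add, h1, add_zero]
  subst hτn
  conv_rhs => rw [← Multiset.cons_erase hτ]
  rw [Multiset.count_cons_self]

lemma nu_disc {T : ℝ} {s : MState} {τ : ℝ} {new : Multiset ℝ}
    (hτ : τ ∈ s.pending) (hτn : τ = s.now) (hnew : ∀ t ∈ new, s.now + 1 ≤ t)
    (hlt : s.now < T) (hub : T ≤ s.now + 1) :
    nuM T ⟨s.now, s.pending.erase τ + new⟩ + 1 = nuM T s := by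
  classical
  unfold nuM
  simp only
  have h1 : new.filter (fun t => t < T) = 0 := by
    rw [Multiset.filter_eq_nil]
    intro t ht
    have := hnew _ ht
    simp only [not_lt]
    linarith
  rw [Multiset.filter_add, h1, add_zero]
  subst hτn
  conv_rhs => rw [← Multiset.cons_erase hτ]
  rw [Multiset.filter_cons_of_pos _ (by simpa using hlt), Multiset.card_cons]

lemma nu_mono {T : ℝ} {s : MState} {d : ℝ} {s' : MState}
    (h : MStep s d s') (hub : T ≤ s.now + 1) :
    nuM T s' ≤ nuM T s := by
  classical
  cases h with
  | disc τ new hτ hτn hc hnew =>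
    unfold nuM
    simp only
    have h1 : new.filter (fun t => t < T) = 0 := by
      rw [Multiset.filter_eq_nil]
      intro t ht
      have := hnew _ ht
      simp only [not_lt]
      linarith
    rw [Multiset.filter_add, h1, add_zero]
    exact Multiset.card_le_card (Multiset.filter_le_filter _ (Multiset.erase_le _ _))
  | time => exact le_refl _

/-- along a block of discrete steps the current time is unchanged and the number
of enabled events decreases by exactly one at each step. -/
lemma chain (e : ℕ → MState) (ds : ℕ → ℝ)
    (hstep : ∀ n, MStep (e n) (ds n) (e (n + 1)))
    (a r : ℕ) (h0 : ∀ k < r, ds (a + k) = 0) :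
    (e (a + r)).now = (e a).now ∧ enab (e (a + r)) + r = enab (e a) := by
  induction r with
  | zero => simp
  | succ r ih =>
    obtain ⟨hnow, hcount⟩ := ih (fun k hk => h0 k (Nat.lt_succ_of_lt hk))
    have hz : ds (a + r) = 0 := h0 r (Nat.lt_succ_self r)
    have hs := hstep (a + r)
    rw [hz] at hs
    obtain ⟨τ, new, hτ, hτn, hnew, hs'⟩ := step_zero hs
    have h1 : enab (e (a + r + 1)) + 1 = enab (e (a + r)) := by
      rw [hs']; exact enab_disc hτ hτn hnew
    have h2 : (e (a + r + 1)).now = (e (a + r)).now := by rw [hs']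
    constructor
    · show (e (a + r + 1)).now = _
      rw [h2, hnow]
    · show enab (e (a + r + 1)) + (r + 1) = _
      omega

/-- absence of Zeno behavior: in any infinite execution of a model
with at most `m` pending messages, all of whose initial pending tags are not in the
past, there are infinitely many timed transitions, their delays sum to infinity, and
between two consecutive timed transitions only finitely many discrete transitions
occur, bounded by the number of pending events at that model time. -/
theorem non_zeno (m : ℕ) (e : ℕ → MState) (ds : ℕ → ℝ)
    (hstep : ∀ n, MStep (e n) (ds n) (e (n + 1)))
    (hwf : ∀ t ∈ (e 0).pending, (e 0).now ≤ t)
    (hcard : ∀ n, Multiset.card (e n).pending ≤ m) :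
    {n | 0 < ds n}.Infinite ∧
    Filter.Tendsto (fun N => ∑ n ∈ Finset.range N, ds n) Filter.atTop Filter.atTop ∧
    (∀ i j, i < j → 0 < ds i → 0 < ds j → (∀ k, i < k → k < j → ds k = 0) →
      (j - i - 1 : ℕ) ≤ Multiset.card (e (i + 1)).pending) := by
  have hnn : ∀ n, 0 ≤ ds n := fun n => step_nonneg (hstep n)
  have hnow : ∀ n, (e (n + 1)).now = (e n).now + ds n := fun n => step_now (hstep n)
  have hmono : Monotone fun n => (e n).now :=
    monotone_nat_of_le_succ (fun n => by rw [hnow n]; linarith [hnn n])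
  have hinf' : ∀ N, ∃ n, N ≤ n ∧ 0 < ds n := by
    intro N
    by_contra hcon
    push_neg at hcon
    have hz : ∀ k, k < enab (e N) + 1 → ds (N + k) = 0 :=
      fun k _ => le_antisymm (hcon _ (Nat.le_add_right _ _)) (hnn _)
    have := (chain e ds hstep N (enab (e N) + 1) hz).2
    omega
  refine ⟨?_, ?_, ?_⟩
  · -- infinitely many timed transitions
    by_contra hfin
    rw [Set.not_infinite] at hfin
    obtain ⟨b, hb⟩ := hfin.bddAbove
    obtain ⟨n, hn, hdn⟩ := hinf' (b + 1)
    have : n ≤ b := hb hdn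
    omega
  · -- unbounded model time and divergent delay sum
    have claimB : ∀ n, ∃ k, (e n).now + 1 ≤ (e (n + k)).now := by
      intro n
      by_contra hcon
      push_neg at hcon
      set T' := (e n).now + 1 with hT'
      have hge : ∀ k, (e n).now ≤ (e (n + k)).now := fun k => hmono (Nat.le_add_right n k)
      have hub : ∀ k, T' ≤ (e (n + k)).now + 1 := fun k => by
        have := hge k; rw [hT']; linarith
      have key : ∀ k, nuM T' (e (n + k + 2)) + 1 ≤ nuM T' (e (n + k)) := by
        intro k
        rcases lt_or_ge 0 (ds (n + k)) with hpos | hle0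
        · obtain ⟨hn1, hp1, hm1⟩ := step_pos (hstep (n + k)) hpos
          have hz : ds (n + k + 1) = 0 := step_mem (hstep (n + k + 1)) hm1
          have hs := hstep (n + k + 1)
          rw [hz] at hs
          obtain ⟨τ, new, hτ, hτn, hnew, hs'⟩ := step_zero hs
          have hnu1 : nuM T' (e (n + k + 1)) = nuM T' (e (n + k)) := by
            unfold nuM; rw [hp1]
          have hlt1 : (e (n + k + 1)).now < T' := hcon (k + 1)
          have h1 : nuM T' (e (n + k + 2)) + 1 = nuM T' (e (n + k + 1)) := by
            rw [hs']; exact nu_disc hτ hτn hnew hlt1 (hub (k + 1))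
          omega
        · have hz : ds (n + k) = 0 := le_antisymm hle0 (hnn _)
          have hs := hstep (n + k)
          rw [hz] at hs
          obtain ⟨τ, new, hτ, hτn, hnew, hs'⟩ := step_zero hs
          have h1 : nuM T' (e (n + k + 1)) + 1 = nuM T' (e (n + k)) := by
            rw [hs']; exact nu_disc hτ hτn hnew (hcon k) (hub k)
          have h2 : nuM T' (e (n + k + 2)) ≤ nuM T' (e (n + k + 1)) :=
            nu_mono (hstep (n + k + 1)) (hub (k + 1))
          omega
      have iter : ∀ s, nuM T' (e (n + 2 * s)) + s ≤ nuM T' (e n) := by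
        intro s
        induction s with
        | zero => simp
        | succ s ih =>
          have hk := key (2 * s)
          have harith : n + 2 * (s + 1) = n + 2 * s + 2 := by ring
          rw [harith]
          omega
      have := iter (nuM T' (e n) + 1)
      omega
    have grow : ∀ j : ℕ, ∃ N, (e 0).now + j ≤ (e N).now := by
      intro j
      induction j with
      | zero => exact ⟨0, by simp⟩
      | succ j ih =>
        obtain ⟨N, hN⟩ := ih
        obtain ⟨k, hk⟩ := claimB N
        exact ⟨N + k, by push_cast; linarith⟩
    have hsum : ∀ N, ∑ n ∈ Finset.range N, ds n = (e N).now - (e 0).now := by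
      intro N
      induction N with
      | zero => simp
      | succ N ih =>
        rw [Finset.sum_range_succ, ih, hnow]
        ring
    rw [Filter.tendsto_atTop]
    intro b
    obtain ⟨j, hj⟩ := exists_nat_ge (b + (e 0).now - (e 0).now)
    obtain ⟨N0, hN0⟩ := grow j
    rw [Filter.eventually_atTop]
    refine ⟨N0, fun N hN => ?_⟩
    have hm' := hmono hN
    simp only at hm'
    rw [hsum]
    have : b ≤ (e N0).now - (e 0).now := by linarith
    linarith
  · -- bounded number of discrete steps between consecutive timed transitions
    intro i j hij hdi hdj hmid
    have h0 : ∀ k < j - (i + 1), ds (i + 1 + k) = 0 := by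
      intro k hk
      exact hmid _ (by omega) (by omega)
    have hchain := (chain e ds hstep (i + 1) (j - (i + 1)) h0).2
    have hle : enab (e (i + 1)) ≤ Multiset.card (e (i + 1)).pending := by
      unfold enab
      exact Multiset.count_le_card _ _
    omega
end

section
/- Separation along a route: if two aircraft A and B have conflict-free flight plans in the sense that for every sub-track s shared by both routes, aircraft A neither arrives at s at the same time B arrives at s nor arrives at s at the time B departs from s (and vice versa), and both occupy each sub-track for exactly FD time units, then at no point in time do A and B occupy the same sub-track simultaneously. -/
/- A flight plan assigns to each sub-track of an aircraft's route an arrival time;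
the aircraft occupies a sub-track s during the half-open interval
[t(s), t(s) + FD), where FD > 0 is the common traveling time per sub-track.  The
no-time-conflict condition states that on every shared sub-track the two arrival
times differ by at least FD. -/

/-- Aircraft with route `route` and arrival times `t` occupies sub-track `s` at
time `τ`. -/
def Occupies {Subtrack : Type} (route : Set Subtrack) (t : Subtrack → ℝ) (FD : ℝ)
    (s : Subtrack) (τ : ℝ) : Prop :=
  s ∈ route ∧ t s ≤ τ ∧ τ < t s + FD

/-- separation along a route: if the flight plans of aircraft A and B
are conflict-free — on every shared sub-track their arrival times differ by at least
FD (so neither arrives when the other arrives or departs) — and both occupy each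
sub-track for exactly FD time units, then A and B never occupy the same sub-track
simultaneously. -/
theorem separation {Subtrack : Type} (routeA routeB : Set Subtrack)
    (tA tB : Subtrack → ℝ) (FD : ℝ) (hFD : 0 < FD)
    (hconflictFree : ∀ s ∈ routeA ∩ routeB, FD ≤ |tA s - tB s|) :
    ∀ (s : Subtrack) (τ : ℝ),
      ¬ (Occupies routeA tA FD s τ ∧ Occupies routeB tB FD s τ) := by
  rintro s τ ⟨⟨hA, hA1, hA2⟩, hB, hB1, hB2⟩
  have h := hconflictFree s ⟨hA, hB⟩
  cases' abs_cases (tA s - tB s) with hc hc <;> rw [hc.1] at h <;> linarith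
end

section
/- Algorithm 1 (state-space generation) terminates on any model with finitely many moving objects, finitely many actors, integer time tags bounded by the analysis-time threshold, and a deterministic per-trigger event production in which each triggered actor produces at most one new event with a strictly larger time tag: the generated state space is finite and the while-loop processes each timed state at most once. -/
/- Abstract model of Algorithm 1: a state is the current (integer) model time and
the finite multiset of integer time tags of pending events.  A discrete step
triggers an actor on an event enabled at the current time, producing at most one new
event with a strictly larger tag bounded by the analysis-time threshold T; a timed
step, possible only when no event is enabled, advances time to the smallest pending
tag. -/

structure AState where
  now : ℕ
  pending : Multiset ℕ

inductive AStep (T : ℕ) : AState → AState → Prop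
  | disc (s : AState) (τ : ℕ) (new : Multiset ℕ) :
      τ ∈ s.pending → τ = s.now → Multiset.card new ≤ 1 →
      (∀ t ∈ new, s.now + 1 ≤ t ∧ t ≤ T) →
      AStep T s ⟨s.now, s.pending.erase τ + new⟩
  | time (s : AState) (τ : ℕ) :
      τ ∈ s.pending → s.now < τ → (∀ t ∈ s.pending, τ ≤ t) →
      AStep T s ⟨τ, s.pending⟩

/-- The invariant maintained along any execution. -/
def AInv (T m : ℕ) (s : AState) : Prop :=
  s.now ≤ T ∧ (∀ t ∈ s.pending, t ≤ T) ∧ Multiset.card s.pending ≤ m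

lemma astep_inv {T m : ℕ} {s s' : AState} (h : AStep T s s') (hs : AInv T m s) :
    AInv T m s' := by
  obtain ⟨h1, h2, h3⟩ := hs
  cases h with
  | disc τ new hτ hτeq hc hnew =>
    refine ⟨h1, ?_, ?_⟩
    · intro t ht
      rcases Multiset.mem_add.mp ht with ht | ht
      · exact h2 t (Multiset.mem_of_mem_erase ht)
      · exact (hnew t ht).2
    · have hlt := Multiset.card_erase_lt_of_mem hτ
      have hadd : Multiset.card (s.pending.erase τ + new)
          = Multiset.card (s.pending.erase τ) + Multiset.card new :=
        Multiset.card_add _ _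
      show Multiset.card (s.pending.erase τ + new) ≤ m
      omega
  | time τ hτ hlt hmin =>
    exact ⟨h2 τ hτ, h2, h3⟩

/-- Termination measure. -/
def mu (T : ℕ) (s : AState) : ℕ :=
  (T + 1) * (s.pending.map (fun t => T + 1 - t)).sum + (T - s.now)

lemma astep_decr {T : ℕ} {s s' : AState} (h : AStep T s s')
    (h1 : s.now ≤ T) (h2 : ∀ t ∈ s.pending, t ≤ T) :
    mu T s' < mu T s := by
  cases h with
  | disc τ new hτ hτeq hc hnew =>
    have key : (s.pending.map (fun t => T + 1 - t)).sum
        = (T + 1 - τ) + ((s.pending.erase τ).map (fun t => T + 1 - t)).sum := by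
      conv_lhs => rw [← Multiset.cons_erase hτ]
      simp
    have hnewsum : (new.map (fun t => T + 1 - t)).sum ≤ T - s.now := by
      rcases Nat.le_one_iff_eq_zero_or_eq_one.mp hc with h0 | h1'
      · rw [Multiset.card_eq_zero.mp h0]; simp
      · obtain ⟨a, ha⟩ := Multiset.card_eq_one.mp h1'
        subst ha
        have := hnew a (by simp)
        simp
        omega
    simp only [mu, Multiset.map_add, Multiset.sum_add]
    set E := ((s.pending.erase τ).map (fun t => T + 1 - t)).sum with hE
    set N := (new.map (fun t => T + 1 - t)).sum with hN
    subst hτeq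
    rw [key]
    have hEN : E + N < T + 1 - s.now + E := by omega
    have hmul : (T + 1) * (E + N) < (T + 1) * (T + 1 - s.now + E) :=
      by exact (Nat.mul_lt_mul_left (Nat.succ_pos T)).mpr hEN
    omega
  | time τ hτ hlt hmin =>
    have hτT : τ ≤ T := h2 τ hτ
    simp only [mu]
    exact Nat.add_lt_add_left (by omega) _

lemma no_strict_decreasing (f : ℕ → ℕ) (h : ∀ n, f (n + 1) < f n) : False := by
  have key : ∀ n, f n + n ≤ f 0 := by
    intro n
    induction n with
    | zero => simp
    | succ k ih => have := h k; omega
  have := key (f 0 + 1)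
  omega

/-- termination of the state-space generation: for a model with at
most `m` moving objects (pending events), integer time tags bounded by the threshold
`T`, and at most one strictly later event produced per trigger, the set of states
reachable from the initial state is finite and there is no infinite execution — so
the while-loop of Algorithm 1 processes each timed state at most once and
terminates. -/
theorem algorithm_terminates (T m : ℕ) (s0 : AState)
    (hnow : s0.now ≤ T)
    (htags : ∀ t ∈ s0.pending, s0.now ≤ t ∧ t ≤ T)
    (hcard : Multiset.card s0.pending ≤ m) :
    {s : AState | Relation.ReflTransGen (AStep T) s0 s}.Finite ∧
    ¬ ∃ e : ℕ → AState, e 0 = s0 ∧ ∀ n, AStep T (e n) (e (n + 1)) := by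
  have hinv0 : AInv T m s0 := ⟨hnow, fun t ht => (htags t ht).2, hcard⟩
  have hreach_inv : ∀ s, Relation.ReflTransGen (AStep T) s0 s → AInv T m s := by
    intro s h
    induction h with
    | refl => exact hinv0
    | tail _ hstep ih => exact astep_inv hstep ih
  constructor
  · -- finiteness: reachable states map injectively into a finite set
    set N : Multiset ℕ := m • (Finset.range (T + 1)).val with hNdef
    have hpow : {M : Multiset ℕ | M ≤ N}.Finite := by
      have : {M : Multiset ℕ | M ≤ N} = {M : Multiset ℕ | M ∈ N.powerset} := by
        ext M; simp [Multiset.mem_powerset]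
      rw [this]
      exact N.powerset.finite_toSet
    have hF : ((Set.Iic T) ×ˢ {M : Multiset ℕ | M ≤ N}).Finite :=
      (Set.finite_Iic T).prod hpow
    apply Set.Finite.subset (hF.preimage (f := fun s : AState => (s.now, s.pending)) ?_)
    · intro s hs
      obtain ⟨h1, h2, h3⟩ := hreach_inv s hs
      constructor
      · exact h1
      · simp only [Set.mem_setOf_eq]
        rw [Multiset.le_iff_count]
        intro a
        by_cases ha : a ∈ s.pending
        · have haT : a ≤ T := h2 a ha
          have hcount : Multiset.count a s.pending ≤ m :=
            le_trans (Multiset.count_le_card a _) h3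
          have : Multiset.count a N = m := by
            rw [hNdef, Multiset.count_nsmul, Multiset.count_eq_one_of_mem
              (Finset.range (T + 1)).nodup (by simp; omega)]
            omega
          omega
        · simp [Multiset.count_eq_zero_of_notMem ha]
    · intro a _ b _ hab
      obtain ⟨a1, a2⟩ := a
      obtain ⟨b1, b2⟩ := b
      simp only [Prod.mk.injEq] at hab
      simp [hab.1, hab.2]
  · -- no infinite execution
    rintro ⟨e, he0, hstep⟩
    have hinv : ∀ n, AInv T m (e n) := by
      intro n
      induction n with
      | zero => rw [he0]; exact hinv0
      | succ k ih => exact astep_inv (hstep k) ih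
    exact no_strict_decreasing (fun n => mu T (e n)) fun n =>
      astep_decr (hstep n) (hinv n).1 (hinv n).2.1
end
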